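/- Let X be a finite set with n elements and let S be a subsemilattice of T(X). If S ≠ E_s for every s ∈ X, then |S| < 2^{n-1}, where E_s = {e_A : A ⊆ X \ {s}} and e_A fixes A pointwise and maps all other points to s. -/

import Mathlib

/-!
For commuting idempotents the fixed-point set determines the map and turns composition into
intersection. Hence a finite subsemilattice `S` has a member with smallest fixed-point set, whose
points `s` are fixed by all of `S`, and `e ↦ Fix e` embeds `S` into the `2 ^ (n - 1)` sets
containing `s`. If this embedding is onto, each `e ∈ S` commutes with the member fixing exactly
`{s, x}`, which forces `e x ∈ {x, s}`; so every `e ∈ S` is some `e_A`, every `e_A` occurs, and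
`S = E_s`.
-/

open scoped Classical

def IsSubsemilattice {X : Type*} (S : Set (X → X)) : Prop :=
  S.Nonempty ∧ (∀ e ∈ S, e ∘ e = e) ∧ (∀ e ∈ S, ∀ f ∈ S, e ∘ f = f ∘ e) ∧
    (∀ e ∈ S, ∀ f ∈ S, e ∘ f ∈ S)

noncomputable def eFix {X : Type*} (t : X) (A : Set X) : X → X :=
  fun x => if x ∈ A then x else t

def Esl {X : Type*} (t : X) : Set (X → X) :=
  {e | ∃ A : Set X, A ⊆ {t}ᶜ ∧ e = @eFix X t A}

open Function

section CommutingIdempotents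

variable {α : Type*} {e f : α → α}

theorem apply_mem_fixedPoints_of_comp_self (hf : f ∘ f = f) (x : α) : f x ∈ fixedPoints f :=
  congrFun hf x

theorem fixedPoints_comp_eq_inter (hf : f ∘ f = f) (hef : e ∘ f = f ∘ e) :
    fixedPoints (e ∘ f) = fixedPoints e ∩ fixedPoints f := by
  ext x
  refine ⟨fun hx => ?_, fun ⟨hex, hfx⟩ => hex.comp hfx⟩
  have hx : e (f x) = x := hx
  have hfx : f x = x := by
    have h : f (e (f x)) = e (f (f x)) := congrFun hef.symm (f x)
    rwa [show f (f x) = f x from congrFun hf x, hx] at h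
  exact ⟨show e x = x by rwa [hfx] at hx, hfx⟩

theorem eq_of_fixedPoints_eq (he : e ∘ e = e) (hf : f ∘ f = f) (hef : e ∘ f = f ∘ e)
    (h : fixedPoints e = fixedPoints f) : e = f := by
  have hef_f : e ∘ f = f := funext fun x => (h ▸ apply_mem_fixedPoints_of_comp_self hf x :)
  have hfe_e : f ∘ e = e := funext fun x => (h ▸ apply_mem_fixedPoints_of_comp_self he x :)
  rw [← hef_f, hef, hfe_e]

end CommutingIdempotents

theorem eq_eFix_of_forall_eq_or_eq {X : Type*} {s : X} {e : X → X}
    (h : ∀ x, e x = x ∨ e x = s) : e = eFix s (fixedPoints e \ {s}) := by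
  funext x
  by_cases hx : x ∈ fixedPoints e \ {s}
  · rw [eFix, if_pos hx]; exact hx.1
  · rw [eFix, if_neg hx]
    rcases eq_or_ne x s with rfl | hxs
    · exact (h x).elim id id
    · exact (h x).resolve_left fun hex => hx ⟨hex, hxs⟩

theorem ncard_setOf_mem {X : Type*} [Finite X] (s : X) :
    {A : Set X | s ∈ A}.ncard = 2 ^ (Nat.card X - 1) := by
  have h : {A : Set X | s ∈ A} = compl '' 𝒫 {s}ᶜ := by
    ext A
    simp only [Set.mem_ofPred_eq, Set.mem_image, Set.mem_powerset_iff,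
      Set.subset_compl_singleton_iff]
    exact ⟨fun h => ⟨Aᶜ, not_not_intro h, compl_compl A⟩, by rintro ⟨B, hB, rfl⟩; exact hB⟩
  rw [h, Set.ncard_image_of_injective _ compl_injective, Set.ncard_powerset, Set.ncard_compl,
    Set.ncard_singleton]

namespace IsSubsemilattice

variable {X : Type*} {S : Set (X → X)}

theorem exists_forall_apply_eq_self [Finite X] [Nonempty X] (hS : IsSubsemilattice S) :
    ∃ s, ∀ e ∈ S, e s = s := by
  obtain ⟨hne, hidem, hcomm, hclosed⟩ := hS
  obtain ⟨m, hm, hmin⟩ := S.toFinite.exists_minimalFor fixedPoints S hne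
  have hsub : ∀ e ∈ S, fixedPoints m ⊆ fixedPoints e := by
    intro e he
    have hinter := fixedPoints_comp_eq_inter (hidem m hm) (hcomm e he m hm)
    have := hmin (hclosed e he m hm) (hinter ▸ Set.inter_subset_right)
    exact (hinter ▸ this).trans Set.inter_subset_left
  obtain ⟨x⟩ := ‹Nonempty X›
  exact ⟨m x, fun e he => hsub e he (apply_mem_fixedPoints_of_comp_self (hidem m hm) x)⟩

theorem injOn_fixedPoints (hS : IsSubsemilattice S) : S.InjOn fixedPoints := by
  obtain ⟨-, hidem, hcomm, -⟩ := hS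
  exact fun e he f hf => eq_of_fixedPoints_eq (hidem e he) (hidem f hf) (hcomm e he f hf)

theorem eq_Esl_of_forall_exists_fixedPoints_eq (hS : IsSubsemilattice S) {s : X}
    (hsurj : ∀ A : Set X, s ∈ A → ∃ e ∈ S, fixedPoints e = A) : S = Esl s := by
  obtain ⟨-, -, hcomm, -⟩ := hS
  have hdich : ∀ e ∈ S, ∀ x, e x = x ∨ e x = s := by
    intro e he x
    obtain ⟨f, hf, hfix⟩ := hsurj {s, x} (Set.mem_insert s _)
    have hfx : f x = x := (hfix ▸ Set.mem_insert_of_mem s rfl : x ∈ fixedPoints f)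
    have hfex : e x ∈ fixedPoints f := by
      show f (e x) = e x
      rw [← comp_apply (f := f), ← hcomm e he f hf, comp_apply, hfx]
    rw [hfix] at hfex
    exact hfex.symm
  refine Set.Subset.antisymm
    (fun e he => ⟨_, fun x hx => hx.2, eq_eFix_of_forall_eq_or_eq (hdich e he)⟩) ?_
  rintro _ ⟨A, hA, rfl⟩
  obtain ⟨f, hf, hfix⟩ := hsurj (insert s A) (Set.mem_insert s A)
  have hsA : s ∉ A := fun h => hA h rfl
  rwa [← Set.insert_sdiff_self_of_notMem hsA, ← hfix, ← eq_eFix_of_forall_eq_or_eq (hdich f hf)]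

end IsSubsemilattice

theorem card_lt_of_ne_Et {X : Type*} [Fintype X] {n : ℕ}
    (hn : Fintype.card X = n) (hn1 : 1 ≤ n)
    (S : Set (X → X)) (hS : IsSubsemilattice S)
    (hne : ∀ s : X, S ≠ Esl s) :
    S.ncard < 2 ^ (n - 1) := by
  have : Nonempty X := Fintype.card_pos_iff.mp (hn ▸ hn1)
  obtain ⟨s, hs⟩ := hS.exists_forall_apply_eq_self
  have hsub : fixedPoints '' S ⊆ {A | s ∈ A} := by
    rintro _ ⟨e, he, rfl⟩
    exact hs e he
  have hcard : {A : Set X | s ∈ A}.ncard = 2 ^ (n - 1) := by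
    rw [ncard_setOf_mem, Nat.card_eq_fintype_card, hn]
  by_contra! hle
  have himage : fixedPoints '' S = {A | s ∈ A} := by
    refine Set.eq_of_subset_of_ncard_le hsub ?_
    rwa [hS.injOn_fixedPoints.ncard_image, hcard]
  refine hne s (hS.eq_Esl_of_forall_exists_fixedPoints_eq fun A hA => ?_)
  exact (himage.symm ▸ hA : A ∈ fixedPoints '' S)
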